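/- arXiv:2305.19565 — 5 statements merged into one kernel-verified Lean document; each statement's English description precedes it below -/
import Mathlib

section
/- The cardinality of L satisfies |L| = Σ_{d∣m} (1/d)·Σ_{e∣d} μ(e)·(q^{d/e} − 1), where μ denotes the Möbius function and the outer sum ranges over the positive divisors d of m and the inner sum over the positive divisors e of d. -/
open Polynomial

noncomputable section

/-- The orbit of `j : ZMod N` under multiplication by `q`. -/
def qOrbit (N q : ℕ) (j : ZMod N) : Set (ZMod N) :=
  Set.range fun k : ℕ => (q : ZMod N) ^ k * j

/-- The set `L` of orbits of `ZMod N` under multiplication by `q`. -/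
def orbitSet (N q : ℕ) : Set (Set (ZMod N)) :=
  {l | ∃ j : ZMod N, l = qOrbit N q j}

/-!
Multiplication by `q` on `ZMod (q ^ m - 1)` has `m`-th iterate the identity, so the orbit of `x` has
`minimalPeriod x` elements, a divisor of `m`, and `|L| = ∑_{d ∣ m} a_d / d` where `a_d` counts the
points of exact period `d`. The points of period dividing `n` are the solutions of
`(q ^ n - 1) x = 0`; for `n ∣ m` there are exactly `q ^ n - 1` of them because
`q ^ n - 1 ∣ q ^ m - 1`. Möbius inversion of `∑_{d ∣ n} a_d = #{x | f^[n] x = x}` gives `a_d`.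
-/

open Finset Function

theorem natCard_range_eq_sum_inv_ncard_preimage {α β K : Type*} [Fintype α]
    [DivisionSemiring K] [CharZero K] (g : α → β) :
    (Nat.card (Set.range g) : K) = ∑ x, 1 / ((g ⁻¹' {g x}).ncard : K) := by
  classical
  have hfiber (x : α) : (g ⁻¹' {g x}).ncard = #{y | g y = g x} := by
    rw [← Set.ncard_coe_finset]; congr; ext; simp
  simp only [hfiber]
  rw [← Set.image_univ, ← coe_univ, ← coe_image, Nat.card_coe_set_eq, Set.ncard_coe_finset,
    ← sum_fiberwise_of_maps_to (g := g) (t := univ.image g)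
      (fun x _ => mem_image_of_mem g (mem_univ x)), card_eq_sum_ones, Nat.cast_sum]
  refine sum_congr rfl fun b hb => ?_
  obtain ⟨a, -, rfl⟩ := mem_image.mp hb
  have hne : (#{y | g y = g a} : K) ≠ 0 :=
    Nat.cast_ne_zero.mpr (card_ne_zero_of_mem (mem_filter.mpr ⟨mem_univ a, rfl⟩))
  have hconst : ∀ x ∈ ({y | g y = g a} : Finset α),
      1 / (#{y | g y = g x} : K) = 1 / #{y | g y = g a} := fun x hx => by
    rw [(mem_filter.mp hx).2]
  rw [sum_congr rfl hconst, sum_const, nsmul_eq_mul, mul_one_div_cancel hne, Nat.cast_one]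

namespace Function

variable {α : Type*} {f : α → α} {x y : α} {n : ℕ}

theorem range_iterate_eq_iff (hx : x ∈ periodicPts f) :
    Set.range (fun n => f^[n] y) = Set.range (fun n => f^[n] x) ↔
      y ∈ Set.range (fun n => f^[n] x) := by
  refine ⟨fun h => h ▸ ⟨0, rfl⟩, ?_⟩
  rintro ⟨k, rfl⟩
  have hk : f^[k] x ∈ periodicPts f := by
    rw [← minimalPeriod_pos_iff_mem_periodicPts, minimalPeriod_apply_iterate hx]
    exact minimalPeriod_pos_of_mem_periodicPts hx
  ext y
  rw [Set.mem_range, Set.mem_range, ← mem_periodicOrbit_iff hx, ← mem_periodicOrbit_iff hk,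
    periodicOrbit_apply_iterate_eq hx]

theorem range_iterate_eq_image_Iio (hx : x ∈ periodicPts f) :
    Set.range (fun n => f^[n] x) = (fun n => f^[n] x) '' Set.Iio (minimalPeriod f x) := by
  ext y
  simp only [Set.mem_range, Set.mem_image, Set.mem_Iio, ← mem_periodicOrbit_iff hx,
    periodicOrbit_def, Cycle.mem_coe_iff, List.mem_map, List.mem_range]

theorem ncard_range_iterate (hx : x ∈ periodicPts f) :
    (Set.range fun n => f^[n] x).ncard = minimalPeriod f x := by
  rw [range_iterate_eq_image_Iio hx, iterate_injOn_Iio_minimalPeriod.ncard_image,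
    Set.ncard_Iio_nat]

theorem natCard_range_range_iterate {K : Type*} [DivisionSemiring K] [CharZero K] [Fintype α]
    (hn : n ≠ 0) (hf : ∀ x, IsPeriodicPt f n x) :
    (Nat.card (Set.range fun x => Set.range fun k => f^[k] x) : K) =
      ∑ d ∈ n.divisors, (1 / (d : K)) * #{x | minimalPeriod f x = d} := by
  have hper (x : α) : x ∈ periodicPts f := mk_mem_periodicPts (Nat.pos_of_ne_zero hn) (hf x)
  have hfiber (x : α) : (fun y => Set.range fun k => f^[k] y) ⁻¹'
      {Set.range fun k => f^[k] x} = Set.range fun k => f^[k] x :=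
    Set.ext fun _ => range_iterate_eq_iff (hper x)
  simp only [natCard_range_eq_sum_inv_ncard_preimage, hfiber, ncard_range_iterate (hper _)]
  rw [← sum_fiberwise_of_maps_to (g := minimalPeriod f) (t := n.divisors)
    fun x _ => Nat.mem_divisors.mpr ⟨(hf x).minimalPeriod_dvd, hn⟩]
  refine sum_congr rfl fun d _ => ?_
  have hconst : ∀ x ∈ ({x | minimalPeriod f x = d} : Finset α),
      1 / (minimalPeriod f x : K) = 1 / d := fun x hx => by
    rw [(mem_filter.mp hx).2]
  rw [sum_congr rfl hconst, sum_const, nsmul_eq_mul, (Nat.cast_commute _ _).eq]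

theorem sum_card_minimalPeriod_eq_card_isPeriodicPt [Fintype α] [DecidableEq α] (hn : n ≠ 0) :
    ∑ d ∈ n.divisors, #{x | minimalPeriod f x = d} = #{x | IsPeriodicPt f n x} := by
  rw [card_eq_sum_card_fiberwise (f := minimalPeriod f) (t := n.divisors)
    fun x hx => Nat.mem_divisors.mpr ⟨(mem_filter.mp hx).2.minimalPeriod_dvd, hn⟩]
  refine sum_congr rfl fun d hd => ?_
  rw [filter_filter]
  refine congrArg card (filter_congr fun x _ => ?_)
  rw [isPeriodicPt_iff_minimalPeriod_dvd]
  exact ⟨fun h => ⟨h ▸ Nat.dvd_of_mem_divisors hd, h⟩, And.right⟩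

theorem card_minimalPeriod_eq_sum_moebius {R : Type*} [NonAssocRing R] [Fintype α]
    [DecidableEq α] (hn : 0 < n) :
    (#{x | minimalPeriod f x = n} : R) =
      ∑ e ∈ n.divisors, (ArithmeticFunction.moebius e : R) * #{x | IsPeriodicPt f (n / e) x} := by
  have hsum (k : ℕ) (hk : 0 < k) : ∑ d ∈ k.divisors, (#{x | minimalPeriod f x = d} : R) =
      #{x | IsPeriodicPt f k x} := by
    rw [← Nat.cast_sum, sum_card_minimalPeriod_eq_card_isPeriodicPt hk.ne']
  rw [← ArithmeticFunction.sum_eq_iff_sum_mul_moebius_eq.mp hsum n hn,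
    Nat.sum_divisorsAntidiagonal fun e k =>
      (ArithmeticFunction.moebius e : R) * #{x | IsPeriodicPt f k x}]

end Function

namespace ZMod

theorem card_filter_natCast_mul_eq_zero {N c : ℕ} [NeZero N] (hc : c ∣ N) :
    #{x : ZMod N | (c : ZMod N) * x = 0} = c := by
  obtain ⟨k, rfl⟩ := hc
  have hk : k ≠ 0 := right_ne_zero_of_mul (NeZero.ne (c * k))
  have hc : c ≠ 0 := left_ne_zero_of_mul (NeZero.ne (c * k))
  let φ := (ZMod.castHom (dvd_mul_left k c) (ZMod k)).toAddMonoidHom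
  have hker (x : ZMod (c * k)) : x ∈ φ.ker ↔ (c : ZMod (c * k)) * x = 0 := by
    obtain ⟨v, rfl⟩ := ZMod.natCast_zmod_surjective x
    simp only [AddMonoidHom.mem_ker, φ, RingHom.toAddMonoidHom_eq_coe, AddMonoidHom.coe_coe,
      map_natCast, ← Nat.cast_mul, ZMod.natCast_eq_zero_iff,
      Nat.mul_dvd_mul_iff_left (Nat.pos_of_ne_zero hc)]
  have hcard : Nat.card φ.ker * k = c * k :=
    calc Nat.card φ.ker * k = Nat.card φ.ker * φ.ker.index := by
          rw [AddSubgroup.index_ker, AddMonoidHom.range_eq_top_of_surjective _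
            (ZMod.castHom_surjective (dvd_mul_left k c)), AddSubgroup.card_top, Nat.card_zmod]
      _ = c * k := by rw [φ.ker.card_mul_index, Nat.card_zmod]
  calc #{x : ZMod (c * k) | (c : ZMod (c * k)) * x = 0}
      = Nat.card {x : ZMod (c * k) // (c : ZMod (c * k)) * x = 0} := by
        rw [Nat.card_eq_fintype_card, Fintype.card_subtype]
    _ = Nat.card φ.ker := Nat.card_congr (Equiv.subtypeEquivRight fun x => (hker x).symm)
    _ = c := Nat.eq_of_mul_eq_mul_right (Nat.pos_of_ne_zero hk) hcard

theorem card_isPeriodicPt_natCast_mul {N q n : ℕ} [NeZero N] (h : q ^ n - 1 ∣ N) :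
    #{x : ZMod N | IsPeriodicPt ((q : ZMod N) * ·) n x} = q ^ n - 1 := by
  have hpos : 1 ≤ q ^ n := by
    by_contra! h0
    exact NeZero.ne N (zero_dvd_iff.mp (by simpa [Nat.lt_one_iff.mp h0] using h))
  rw [← card_filter_natCast_mul_eq_zero h]
  refine congrArg Finset.card (filter_congr fun x _ => ?_)
  simp only [IsPeriodicPt, IsFixedPt, mul_left_iterate]
  rw [Nat.cast_sub hpos, Nat.cast_pow, Nat.cast_one, sub_mul, one_mul, sub_eq_zero]

theorem natCast_pow_eq_one {q m : ℕ} (h : 1 ≤ q ^ m) : (q : ZMod (q ^ m - 1)) ^ m = 1 := by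
  rw [← Nat.cast_pow, ← Nat.sub_add_cancel h, Nat.cast_add, ZMod.natCast_self, zero_add,
    Nat.cast_one]

end ZMod

theorem card_orbitSet_eq_general (q m : ℕ) (hm : 0 < m) (F : Type*) [Field F] [Fintype F]
    (hF : Fintype.card F = q) :
    (Nat.card (orbitSet (q ^ m - 1) q) : ℚ) =
      ∑ d ∈ m.divisors, (1 / (d : ℚ)) *
        ∑ e ∈ d.divisors, (ArithmeticFunction.moebius e : ℚ) * ((q : ℚ) ^ (d / e) - 1) := by
  have hq : 1 < q := hF ▸ Fintype.one_lt_card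
  have hqm : 1 < q ^ m := Nat.one_lt_pow hm.ne' hq
  have : NeZero (q ^ m - 1) := ⟨by omega⟩
  have horbits : orbitSet (q ^ m - 1) q =
      Set.range fun j => Set.range fun k => ((q : ZMod (q ^ m - 1)) * ·)^[k] j := by
    ext l
    simp only [orbitSet, qOrbit, mul_left_iterate, Set.mem_ofPred_eq, Set.mem_range, eq_comm]
  have hper (j : ZMod (q ^ m - 1)) : IsPeriodicPt ((q : ZMod (q ^ m - 1)) * ·) m j := by
    simp only [IsPeriodicPt, IsFixedPt, mul_left_iterate, ZMod.natCast_pow_eq_one hqm.le, one_mul]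
  rw [horbits, natCard_range_range_iterate hm.ne' hper]
  refine sum_congr rfl fun d hd => congrArg _ ?_
  rw [card_minimalPeriod_eq_sum_moebius (Nat.pos_of_mem_divisors hd)]
  refine sum_congr rfl fun e he => congrArg _ ?_
  have hdiv : d / e ∣ m := (Nat.div_dvd_of_dvd (Nat.dvd_of_mem_divisors he)).trans
    (Nat.dvd_of_mem_divisors hd)
  rw [ZMod.card_isPeriodicPt_natCast_mul (Nat.pow_sub_one_dvd_pow_sub_one q hdiv),
    Nat.cast_sub (Nat.one_le_pow _ _ (by omega)), Nat.cast_pow, Nat.cast_one]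

/-- `|L| = ∑_{d ∣ m} (1/d) ∑_{e ∣ d} μ(e) (q^{d/e} − 1)`. -/
theorem card_orbitSet_eq (q m : ℕ) (hm : 0 < m) (hqm : Nat.Coprime q m)
    (F E : Type*) [Field F] [Field E] [Fintype F] [Fintype E] [Algebra F E]
    (hF : Fintype.card F = q) (hE : Fintype.card E = q ^ m)
    (β : E) (hβ : orderOf β = q ^ m - 1) :
    (Nat.card (orbitSet (q ^ m - 1) q) : ℚ) =
      ∑ d ∈ m.divisors, (1 / (d : ℚ)) *
        ∑ e ∈ d.divisors, (ArithmeticFunction.moebius e : ℚ) * ((q : ℚ) ^ (d / e) - 1) :=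
  card_orbitSet_eq_general q m hm F hF
end
end

section
/- The cardinality of L satisfies (q^m−1)/m ≤ |L|, and if moreover m ≥ 2, then |L| < (q^m−1)/m + (1 − 1/m)·q^{m/2+1} (inequalities of real numbers). -/
/-!
Burnside's lemma for the cyclic group generated by `q` in `(ZMod (q ^ m - 1))ˣ`, which has order
exactly `m`, gives `m · |L| = ∑_{k < m} |Fix(q ^ k)|`. The fixed points of `j ↦ q ^ k * j` form the
kernel of multiplication by `q ^ k - 1`, of size `gcd(q ^ k - 1, q ^ m - 1) = q ^ gcd(k, m) - 1`.
The term `k = 0` is `q ^ m - 1`, which gives the lower bound; for `0 < k < m`, `gcd(k, m)` is a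
proper divisor of `m`, so every other term is below `q ^ (m / 2)`.
-/

open Polynomial

noncomputable section

open Finset MulAction Subgroup

theorem card_orbitRel_quotient_zpowers_mul_orderOf {G α : Type*} [Group G] [MulAction G α]
    [Finite α] {g : G} (hg : IsOfFinOrder g) :
    Nat.card (orbitRel.Quotient (zpowers g) α) * orderOf g =
      ∑ k ∈ range (orderOf g), Nat.card (fixedBy α (g ^ k)) := by
  classical
  have := Fintype.ofFinite α
  have : Fintype (zpowers g) := Fintype.ofEquiv _ (finEquivZPowers hg)
  calc Nat.card (orbitRel.Quotient (zpowers g) α) * orderOf g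
      = ∑ h : zpowers g, Fintype.card (fixedBy α h) := by
        rw [sum_card_fixedBy_eq_card_orbits_mul_card_group, ← Nat.card_zpowers,
          Nat.card_eq_fintype_card, Nat.card_eq_fintype_card]
    _ = ∑ k : Fin (orderOf g), Nat.card (fixedBy α (g ^ (k : ℕ))) :=
        (Fintype.sum_equiv (finEquivZPowers hg) _ _ fun k => by
          rw [← Nat.card_eq_fintype_card]; rfl).symm
    _ = _ := Fin.sum_univ_eq_sum_range (fun k => Nat.card (fixedBy α (g ^ k))) _

theorem orbit_zpowers_eq_range_pow_mul {M : Type*} [Monoid M] {u : Mˣ} (hu : IsOfFinOrder u)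
    (j : M) : orbit (zpowers u) j = Set.range fun k : ℕ => (u : M) ^ k * j := by
  ext x
  constructor
  · rintro ⟨⟨g, hg⟩, rfl⟩
    obtain ⟨k, rfl⟩ := hu.mem_powers_iff_mem_zpowers.mpr hg
    exact ⟨k, rfl⟩
  · rintro ⟨k, rfl⟩
    exact ⟨⟨u ^ k, k, zpow_natCast u k⟩, rfl⟩

theorem card_orbitSet_eq_card_orbitRel_quotient {N q : ℕ} {u : (ZMod N)ˣ} (hu : IsOfFinOrder u)
    (huq : (u : ZMod N) = q) :
    Nat.card (orbitSet N q) = Nat.card (orbitRel.Quotient (zpowers u) (ZMod N)) := by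
  have horbit : orbitSet N q = Set.range (orbitRel.Quotient.orbit (G := zpowers u)) := by
    ext l
    simp only [orbitSet, qOrbit, ← huq, ← orbit_zpowers_eq_range_pow_mul hu, Set.mem_ofPred_eq,
      (Quotient.mk''_surjective).exists, orbitRel.Quotient.orbit_mk, Set.mem_range, eq_comm]
  rw [horbit, Nat.card_range_of_injective orbitRel.Quotient.orbit_injective]

theorem ZMod.card_setOf_natCast_mul_eq_self (N : ℕ) [NeZero N] {a : ℕ} (ha : 0 < a) :
    Nat.card {j : ZMod N | (a : ZMod N) * j = j} = N.gcd (a - 1) := by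
  have hker : {j : ZMod N | (a : ZMod N) * j = j} =
      ((nsmulAddMonoidHom (α := ZMod N) (a - 1)).ker : Set (ZMod N)) := by
    ext j
    simp [nsmul_eq_mul, Nat.cast_sub ha, sub_mul, sub_eq_zero]
  rw [hker, SetLike.coe_sort_coe, IsAddCyclic.card_nsmulAddMonoidHom_ker, Nat.card_zmod]

theorem ZMod.card_fixedBy_pow_eq_gcd {N q : ℕ} [NeZero N] (hq : 0 < q) {u : (ZMod N)ˣ}
    (huq : (u : ZMod N) = q) (k : ℕ) :
    Nat.card (fixedBy (ZMod N) (u ^ k)) = N.gcd (q ^ k - 1) := by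
  rw [← card_setOf_natCast_mul_eq_self N (pow_pos hq k)]
  congr! 2
  ext j
  simp [mem_fixedBy, Units.smul_def, huq]

theorem ZMod.natCast_pow_eq_one_of_pow_sub_one {q : ℕ} (hq : 0 < q) (m : ℕ) :
    (q : ZMod (q ^ m - 1)) ^ m = 1 := by
  rw [← Nat.cast_pow, ← Nat.sub_add_cancel (Nat.one_le_pow m q hq), Nat.cast_add,
    ZMod.natCast_self, zero_add, Nat.cast_one]

theorem ZMod.orderOf_natCast_of_pow_sub_one {q m : ℕ} (hq : 2 ≤ q) (hm : 0 < m) :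
    orderOf (q : ZMod (q ^ m - 1)) = m := by
  refine (orderOf_eq_iff hm).mpr
    ⟨natCast_pow_eq_one_of_pow_sub_one (by omega) m, fun k hkm hk h => ?_⟩
  have hqk : 1 < q ^ k := Nat.one_lt_pow hk.ne' (by omega)
  have hlt : q ^ k + 1 < q ^ m := by
    calc q ^ k + 1 < 2 * q ^ k := by omega
      _ ≤ q ^ (k + 1) := by rw [pow_succ']; exact Nat.mul_le_mul_right _ hq
      _ ≤ q ^ m := Nat.pow_le_pow_right (by omega) hkm
  rw [← Nat.cast_pow, ← Nat.cast_one (R := ZMod _), ZMod.natCast_eq_natCast_iff',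
    Nat.mod_eq_of_lt (show q ^ k < q ^ m - 1 by omega),
    Nat.mod_eq_of_lt (show 1 < q ^ m - 1 by omega)] at h
  omega

theorem card_orbitSet_mul_eq_sum_pow_gcd_sub_one {q m : ℕ} (hq : 2 ≤ q) (hm : 0 < m) :
    Nat.card (orbitSet (q ^ m - 1) q) * m = ∑ k ∈ range m, (q ^ m.gcd k - 1) := by
  have : NeZero (q ^ m - 1) := ⟨by
    have := Nat.one_lt_pow hm.ne' (by omega : 1 < q); omega⟩
  set u := Units.ofPowEqOne (q : ZMod (q ^ m - 1)) m
    (ZMod.natCast_pow_eq_one_of_pow_sub_one (by omega) m) hm.ne'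
  have huq : (u : ZMod (q ^ m - 1)) = q := Units.val_ofPowEqOne _ _ _ _
  have hord : orderOf u = m := by
    rw [← orderOf_units, huq, ZMod.orderOf_natCast_of_pow_sub_one hq hm]
  have hu : IsOfFinOrder u := by rw [← orderOf_pos_iff, hord]; exact hm
  rw [card_orbitSet_eq_card_orbitRel_quotient hu huq]
  calc _ = ∑ k ∈ range m, Nat.card (fixedBy (ZMod (q ^ m - 1)) (u ^ k)) := by
        simpa only [hord] using card_orbitRel_quotient_zpowers_mul_orderOf (α := ZMod _) hu
    _ = _ := sum_congr rfl fun k _ => by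
        rw [ZMod.card_fixedBy_pow_eq_gcd (by omega) huq, Nat.pow_sub_one_gcd_pow_sub_one]

theorem Nat.gcd_le_div_two {m k : ℕ} (hk : 0 < k) (hkm : k < m) : m.gcd k ≤ m / 2 := by
  obtain ⟨c, hc⟩ := Nat.gcd_dvd_left m k
  have hle : m.gcd k ≤ k := Nat.gcd_le_right m hk
  have hc2 : 2 ≤ c := by
    rcases c with _ | _ | c
    · simp at hc; omega
    · simp at hc; omega
    · omega
  rw [Nat.le_div_iff_mul_le two_pos]
  calc m.gcd k * 2 ≤ m.gcd k * c := Nat.mul_le_mul_left _ hc2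
    _ = m := hc.symm

theorem sum_pow_gcd_sub_one_le {q m : ℕ} (hq : 0 < q) (hm : 0 < m) :
    ∑ k ∈ range m, (q ^ m.gcd k - 1) ≤ q ^ m - 1 + (m - 1) * q ^ (m / 2) := by
  obtain ⟨n, rfl⟩ := Nat.exists_eq_add_one_of_ne_zero hm.ne'
  rw [sum_range_succ', Nat.gcd_zero_right, add_comm, Nat.add_sub_cancel]
  gcongr
  calc ∑ k ∈ range n, (q ^ (n + 1).gcd (k + 1) - 1)
      ≤ ∑ _k ∈ range n, q ^ ((n + 1) / 2) := sum_le_sum fun k hk =>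
        (Nat.sub_le _ _).trans <| Nat.pow_le_pow_right hq <|
          Nat.gcd_le_div_two k.succ_pos (by simpa using mem_range.mp hk)
    _ = n * q ^ ((n + 1) / 2) := by rw [sum_const, card_range, smul_eq_mul]

theorem card_orbitSet_mul_bounds {q m : ℕ} (hq : 2 ≤ q) (hm : 0 < m) :
    q ^ m - 1 ≤ Nat.card (orbitSet (q ^ m - 1) q) * m ∧
      Nat.card (orbitSet (q ^ m - 1) q) * m ≤ q ^ m - 1 + (m - 1) * q ^ (m / 2) := by
  rw [card_orbitSet_mul_eq_sum_pow_gcd_sub_one hq hm]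
  refine ⟨?_, sum_pow_gcd_sub_one_le (by omega) hm⟩
  simpa using single_le_sum (f := fun k => q ^ m.gcd k - 1) (fun _ _ => Nat.zero_le _)
    (mem_range.mpr hm)

theorem Real.pow_div_two_lt_rpow {x : ℝ} (hx : 1 < x) (m : ℕ) :
    x ^ (m / 2) < x ^ ((m : ℝ) / 2 + 1) := by
  rw [← Real.rpow_natCast]
  refine Real.rpow_lt_rpow_of_exponent_lt hx ?_
  have := Nat.cast_div_le (α := ℝ) (m := m) (n := 2)
  push_cast at this
  linarith

theorem card_orbitSet_bounds_general (q m : ℕ) (hm : 0 < m)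
    (F : Type*) [Field F] [Fintype F]
    (hF : Fintype.card F = q) :
    ((q : ℝ) ^ m - 1) / m ≤ (Nat.card (orbitSet (q ^ m - 1) q) : ℝ) ∧
    (2 ≤ m → (Nat.card (orbitSet (q ^ m - 1) q) : ℝ) <
      ((q : ℝ) ^ m - 1) / m + (1 - 1 / (m : ℝ)) * (q : ℝ) ^ ((m : ℝ) / 2 + 1)) := by
  have hq : 2 ≤ q := hF ▸ Fintype.one_lt_card
  obtain ⟨hlower, hupper⟩ := card_orbitSet_mul_bounds hq hm
  set L := Nat.card (orbitSet (q ^ m - 1) q)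
  have hmR : (0 : ℝ) < m := by exact_mod_cast hm
  have hN : ((q ^ m - 1 : ℕ) : ℝ) = (q : ℝ) ^ m - 1 := by
    rw [Nat.cast_sub (Nat.one_le_pow _ _ (by omega)), Nat.cast_pow, Nat.cast_one]
  refine ⟨?_, fun hm2 => ?_⟩
  · rw [div_le_iff₀ hmR, ← hN]
    exact_mod_cast hlower
  · have hupperR : (L : ℝ) * m ≤ (q : ℝ) ^ m - 1 + (m - 1) * (q : ℝ) ^ (m / 2) := by
      rw [← hN, ← Nat.cast_pred hm]
      exact_mod_cast hupper
    have hlt := Real.pow_div_two_lt_rpow (x := q) (by exact_mod_cast hq) m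
    have hm1 : (0 : ℝ) < m - 1 := by
      rw [sub_pos]; exact_mod_cast hm2
    rw [show ((q : ℝ) ^ m - 1) / m + (1 - 1 / (m : ℝ)) * (q : ℝ) ^ ((m : ℝ) / 2 + 1) =
      ((q : ℝ) ^ m - 1 + (m - 1) * (q : ℝ) ^ ((m : ℝ) / 2 + 1)) / m by field_simp,
      lt_div_iff₀ hmR]
    linarith [mul_lt_mul_of_pos_left hlt hm1]

/-- `(q^m − 1)/m ≤ |L|`, and if `m ≥ 2` then
`|L| < (q^m − 1)/m + (1 − 1/m) q^{m/2 + 1}`. -/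
theorem card_orbitSet_bounds (q m : ℕ) (hm : 0 < m) (hqm : Nat.Coprime q m)
    (F E : Type*) [Field F] [Field E] [Fintype F] [Fintype E] [Algebra F E]
    (hF : Fintype.card F = q) (hE : Fintype.card E = q ^ m)
    (β : E) (hβ : orderOf β = q ^ m - 1) :
    ((q : ℝ) ^ m - 1) / m ≤ (Nat.card (orbitSet (q ^ m - 1) q) : ℝ) ∧
    (2 ≤ m → (Nat.card (orbitSet (q ^ m - 1) q) : ℝ) <
      ((q : ℝ) ^ m - 1) / m + (1 - 1 / (m : ℝ)) * (q : ℝ) ^ ((m : ℝ) / 2 + 1)) :=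
  card_orbitSet_bounds_general q m hm F hF
end
end

section
/- Assume ρ(β^j) ≠ 0 for every j ∈ Z/(q^m−1)Z, i.e. ρ has no root in E^×. If c ∈ C(ρ,t) and deg c ≤ t, then c = 0. -/
open Polynomial

noncomputable section

/-- `β ^ j` for a residue class `j`. -/
def bpow {E : Type*} [Monoid E] {N : ℕ} (β : E) (j : ZMod N) : E :=
  β ^ j.val

/-- The check-matrix entry `h_{i l} = ∑_{j ∈ l} ρ(β^j) β^{i j}`, as an element of `E`. -/
def hEntry {F E : Type*} [CommSemiring F] [CommSemiring E] [Algebra F E] {N : ℕ}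
    (β : E) (ρ : Polynomial F) (i : ℕ) (l : Set (ZMod N)) : E :=
  ∑ᶠ j ∈ l, Polynomial.aeval (bpow β j) ρ * bpow β j ^ i

/-- The code `C(ρ, t)` inside `F^L`. -/
def codeSet (F E : Type*) [Field F] [Field E] [Algebra F E] (N q : ℕ)
    (β : E) (ρ : Polynomial F) (t : ℕ) : Set (↥(orbitSet N q) → F) :=
  {c | ∀ i < t, ∑ᶠ l : orbitSet N q,
    algebraMap F E (c l) * hEntry β ρ i (l : Set (ZMod N)) = 0}

open scoped Classical in
/-- `deg c = ∑_{l : c_l ≠ 0} |l|`. -/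
def wdeg {F : Type*} [Zero F] {N q : ℕ} (c : ↥(orbitSet N q) → F) : ℕ :=
  ∑ᶠ l : orbitSet N q, if c l ≠ 0 then (l : Set (ZMod N)).ncard else 0

lemma mem_qOrbit_self (N q : ℕ) (j : ZMod N) : j ∈ qOrbit N q j :=
  ⟨0, by simp⟩

lemma qOrbit_eq_of_mem {N q m : ℕ} (hq : (q : ZMod N) ^ m = 1) (hm : 0 < m)
    {x j : ZMod N} (hx : x ∈ qOrbit N q j) : qOrbit N q x = qOrbit N q j := by
  obtain ⟨k, rfl⟩ := hx
  have key : (q : ZMod N) ^ (k * (m - 1) + k) = 1 := by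
    have hkm : k * (m - 1) + k = m * k := by
      have : m - 1 + 1 = m := Nat.succ_pred_eq_of_pos hm
      calc k * (m - 1) + k = k * (m - 1 + 1) := by ring
        _ = m * k := by rw [this]; ring
    rw [hkm, pow_mul, hq, one_pow]
  apply Set.eq_of_subset_of_subset
  · rintro y ⟨k', rfl⟩
    refine ⟨k' + k, ?_⟩
    show (q : ZMod N) ^ (k' + k) * j = (q : ZMod N) ^ k' * ((q : ZMod N) ^ k * j)
    rw [pow_add]; ring
  · rintro y ⟨k', rfl⟩
    refine ⟨k' + k * (m - 1), ?_⟩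
    show (q : ZMod N) ^ (k' + k * (m - 1)) * ((q : ZMod N) ^ k * j) = (q : ZMod N) ^ k' * j
    calc (q : ZMod N) ^ (k' + k * (m - 1)) * ((q : ZMod N) ^ k * j)
        = (q : ZMod N) ^ k' * ((q : ZMod N) ^ (k * (m - 1) + k) * j) := by
          rw [pow_add, pow_add]; ring
      _ = (q : ZMod N) ^ k' * j := by rw [key, one_mul]

/-- If `ρ` has no root in `E^×`, `c ∈ C(ρ,t)` and `deg c ≤ t`, then `c = 0`. -/
theorem codeC_low_degree_eq_zero (q m : ℕ) (hm : 0 < m) (hqm : Nat.Coprime q m)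
    (F E : Type*) [Field F] [Field E] [Fintype F] [Fintype E] [Algebra F E]
    (hF : Fintype.card F = q) (hE : Fintype.card E = q ^ m)
    (β : E) (hβ : orderOf β = q ^ m - 1) (ρ : Polynomial F) (t : ℕ) (ht : 0 < t)
    (hρ : ∀ j : ZMod (q ^ m - 1), Polynomial.aeval (bpow β j) ρ ≠ 0)
    (c : ↥(orbitSet (q ^ m - 1) q) → F)
    (hc : c ∈ codeSet F E (q ^ m - 1) q β ρ t) (hdeg : wdeg c ≤ t) :
    c = 0 := by
  classical
  have hq2 : 2 ≤ q := by rw [← hF]; exact Fintype.one_lt_card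
  have hqmle : q ≤ q ^ m := Nat.le_self_pow hm.ne' q
  have hN : 0 < q ^ m - 1 := by omega
  haveI : NeZero (q ^ m - 1) := ⟨hN.ne'⟩
  have hNq : (q ^ m - 1) + 1 = q ^ m := by omega
  have hqpow : (q : ZMod (q ^ m - 1)) ^ m = 1 := by
    have h1 : ((q ^ m : ℕ) : ZMod (q ^ m - 1)) = ((((q ^ m - 1 : ℕ)) + 1 : ℕ) : ZMod (q ^ m - 1)) := by
      rw [hNq]
    push_cast at h1
    rw [ZMod.natCast_self, zero_add] at h1
    exact h1
  -- β is nonzero of order N; powers β^0, ..., β^(N-1) are pairwise distinct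
  have hβN : β ^ (q ^ m - 1) = 1 := by rw [← hβ]; exact pow_orderOf_eq_one β
  have hβ0 : β ≠ 0 := by
    intro h; rw [h, zero_pow hN.ne'] at hβN; exact one_ne_zero hβN.symm
  set u : Eˣ := Units.mk0 β hβ0 with hu
  have hordu : orderOf u = q ^ m - 1 := by rw [← orderOf_units]; exact hβ
  have hbinj : Function.Injective (fun j : ZMod (q ^ m - 1) => bpow β j) := by
    intro a b hab
    have hav : a.val < q ^ m - 1 := ZMod.val_lt a
    have hbv : b.val < q ^ m - 1 := ZMod.val_lt b
    have hcoe : ∀ k : ℕ, ((u ^ k : Eˣ) : E) = β ^ k := fun k => by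
      rw [Units.val_pow_eq_pow_val]; simp [hu]
    have huab : u ^ a.val = u ^ b.val := Units.ext (by rw [hcoe, hcoe]; exact hab)
    have hvv : a.val = b.val :=
      pow_injOn_Iio_orderOf (x := u) (by rwa [Set.mem_Iio, hordu])
        (by rwa [Set.mem_Iio, hordu]) huab
    exact ZMod.val_injective (q ^ m - 1) hvv
  -- the orbit map
  set Φ : ZMod (q ^ m - 1) → ↥(orbitSet (q ^ m - 1) q) :=
    fun j => ⟨qOrbit (q ^ m - 1) q j, ⟨j, rfl⟩⟩ with hΦ
  have mem_iff : ∀ (l : ↥(orbitSet (q ^ m - 1) q)) (j : ZMod (q ^ m - 1)),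
      j ∈ (l : Set (ZMod (q ^ m - 1))) ↔ Φ j = l := by
    rintro ⟨l, j0, rfl⟩ j
    constructor
    · intro hj
      exact Subtype.ext (qOrbit_eq_of_mem hqpow hm hj)
    · intro h
      have hval : qOrbit (q ^ m - 1) q j = qOrbit (q ^ m - 1) q j0 := congrArg Subtype.val h
      show j ∈ qOrbit (q ^ m - 1) q j0
      rw [← hval]
      exact mem_qOrbit_self (q ^ m - 1) q j
  have hΦsurj : ∀ l : ↥(orbitSet (q ^ m - 1) q), ∃ j : ZMod (q ^ m - 1), Φ j = l := by
    rintro ⟨l, j0, rfl⟩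
    exact ⟨j0, rfl⟩
  haveI : Finite ↥(orbitSet (q ^ m - 1) q) := Subtype.finite
  haveI : Fintype ↥(orbitSet (q ^ m - 1) q) := Fintype.ofFinite _
  -- rewrite the parity checks as a single sum over ZMod (q ^ m - 1)
  have hcheck : ∀ i, i < t → ∑ j : ZMod (q ^ m - 1),
      algebraMap F E (c (Φ j)) * (Polynomial.aeval (bpow β j) ρ * bpow β j ^ i) = 0 := by
    intro i hi
    have h0 := hc i hi
    rw [finsum_eq_sum_of_fintype] at h0
    calc ∑ j : ZMod (q ^ m - 1),
        algebraMap F E (c (Φ j)) * (Polynomial.aeval (bpow β j) ρ * bpow β j ^ i)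
        = ∑ l : ↥(orbitSet (q ^ m - 1) q), ∑ j ∈ Finset.univ.filter (fun j => Φ j = l),
            algebraMap F E (c (Φ j)) * (Polynomial.aeval (bpow β j) ρ * bpow β j ^ i) :=
          (Finset.sum_fiberwise _ _ _).symm
      _ = ∑ l : ↥(orbitSet (q ^ m - 1) q),
            algebraMap F E (c l) * hEntry β ρ i (l : Set (ZMod (q ^ m - 1))) := by
          refine Finset.sum_congr rfl fun l _ => ?_
          rw [hEntry, finsum_mem_eq_finite_toFinset_sum _ (Set.toFinite _), Finset.mul_sum]
          have hset : Finset.univ.filter (fun j => Φ j = l)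
              = (Set.toFinite (l : Set (ZMod (q ^ m - 1)))).toFinset := by
            ext j
            simp only [Finset.mem_filter, Finset.mem_univ, true_and,
              Set.Finite.mem_toFinset]
            exact (mem_iff l j).symm
          rw [hset]
          refine Finset.sum_congr rfl fun j hj => ?_
          have hjl : Φ j = l := (mem_iff l j).1 (by
            simpa [Set.Finite.mem_toFinset] using hj)
          rw [hjl]
      _ = 0 := h0
  -- the support of c, pulled back to ZMod (q ^ m - 1)
  set S : Finset (ZMod (q ^ m - 1)) :=
    Finset.univ.filter (fun j : ZMod (q ^ m - 1) => c (Φ j) ≠ 0) with hS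
  have hScard : S.card = wdeg c := by
    rw [wdeg, finsum_eq_sum_of_fintype]
    have h1 : ∑ l : ↥(orbitSet (q ^ m - 1) q),
        ∑ _j ∈ S.filter (fun j => Φ j = l), 1 = S.card := by
      rw [Finset.sum_fiberwise S Φ (fun _ => (1 : ℕ))]
      simp
    rw [← h1]
    refine Finset.sum_congr rfl fun l _ => ?_
    by_cases hcl : c l ≠ 0
    · have hset : S.filter (fun j => Φ j = l)
          = (Set.toFinite (l : Set (ZMod (q ^ m - 1)))).toFinset := by
        ext j
        simp only [hS, Finset.mem_filter, Finset.mem_univ, true_and,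
          Set.Finite.mem_toFinset]
        rw [mem_iff l j]
        constructor
        · rintro ⟨_, h⟩; exact h
        · intro h; exact ⟨by rw [h]; exact hcl, h⟩
      rw [hset, if_pos hcl, Finset.sum_const, smul_eq_mul, mul_one,
        Set.ncard_eq_toFinset_card (l : Set (ZMod (q ^ m - 1))) (Set.toFinite _)]
    · have hset : S.filter (fun j => Φ j = l) = ∅ := by
        ext j
        simp only [hS, Finset.mem_filter, Finset.mem_univ, true_and, Finset.notMem_empty,
          iff_false, not_and]
        intro hne h
        exact hcl (h ▸ hne)
      rw [hset, if_neg hcl]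
      simp
  have hst : S.card ≤ t := hScard ▸ hdeg
  -- Vandermonde argument
  set e := S.equivFin with he
  set v : Fin S.card → E := fun k =>
    algebraMap F E (c (Φ ((e.symm k : ↥S) : ZMod (q ^ m - 1))))
      * Polynomial.aeval (bpow β ((e.symm k : ↥S) : ZMod (q ^ m - 1))) ρ with hv
  set f : Fin S.card → E := fun k => bpow β ((e.symm k : ↥S) : ZMod (q ^ m - 1)) with hf
  have hfinj : Function.Injective f := by
    intro a b hab
    have : ((e.symm a : ↥S) : ZMod (q ^ m - 1)) = ((e.symm b : ↥S) : ZMod (q ^ m - 1)) :=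
      hbinj hab
    exact e.symm.injective (Subtype.ext this)
  have hv0 : v = 0 := by
    apply Matrix.eq_zero_of_forall_pow_sum_mul_pow_eq_zero hfinj
    intro i
    have hit : (i : ℕ) < t := lt_of_lt_of_le i.2 hst
    have h0 := hcheck i hit
    have hsub : ∑ j ∈ S,
        algebraMap F E (c (Φ j)) * (Polynomial.aeval (bpow β j) ρ * bpow β j ^ (i : ℕ)) = 0 := by
      rw [← h0]
      apply Finset.sum_subset (Finset.subset_univ S)
      intro j _ hj
      have : c (Φ j) = 0 := by
        by_contra hne
        exact hj (by simp [hS, hne])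
      rw [this, map_zero, zero_mul]
    calc ∑ k : Fin S.card, v k * f k ^ (i : ℕ)
        = ∑ x : ↥S, algebraMap F E (c (Φ (x : ZMod (q ^ m - 1))))
            * (Polynomial.aeval (bpow β (x : ZMod (q ^ m - 1))) ρ
              * bpow β (x : ZMod (q ^ m - 1)) ^ (i : ℕ)) := by
          rw [← Equiv.sum_comp e.symm (fun x : ↥S =>
            algebraMap F E (c (Φ (x : ZMod (q ^ m - 1))))
              * (Polynomial.aeval (bpow β (x : ZMod (q ^ m - 1))) ρ
                * bpow β (x : ZMod (q ^ m - 1)) ^ (i : ℕ)))]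
          refine Finset.sum_congr rfl fun k _ => ?_
          rw [hv, hf]
          ring
      _ = ∑ j ∈ S, algebraMap F E (c (Φ j))
            * (Polynomial.aeval (bpow β j) ρ * bpow β j ^ (i : ℕ)) :=
          Finset.sum_coe_sort S (fun j => algebraMap F E (c (Φ j))
            * (Polynomial.aeval (bpow β j) ρ * bpow β j ^ (i : ℕ)))
      _ = 0 := hsub
  have hSempty : S = ∅ := by
    by_contra hne
    obtain ⟨j, hj⟩ := Finset.nonempty_of_ne_empty hne
    have hcj : c (Φ j) ≠ 0 := by
      simpa [hS] using hj
    have hx := congrFun hv0 (e ⟨j, hj⟩)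
    rw [hv] at hx
    simp only [Equiv.symm_apply_apply, Pi.zero_apply] at hx
    rcases mul_eq_zero.1 hx with h | h
    · exact hcj ((_root_.map_eq_zero (algebraMap F E)).1 h)
    · exact hρ j h
  funext l
  obtain ⟨j0, hj0⟩ := hΦsurj l
  have hj0S : j0 ∉ S := by rw [hSempty]; exact Finset.notMem_empty j0
  have hcz : ¬ c (Φ j0) ≠ 0 := by
    intro hne
    exact hj0S (by simp [hS, hne])
  rw [← hj0]
  simpa using hcz
end
end

section
/- Let K be a field, t a positive integer, and S(x) ∈ K[x] a polynomial. Suppose (λ_1, ω_1) and (λ_2, ω_2) are pairs of polynomials in K[x] such that, for k = 1,2: λ_k(0) = 1, gcd(λ_k, ω_k) = 1, deg ω_k < deg λ_k, 2·deg λ_k ≤ t, and λ_k(x)·S(x) ≡ ω_k(x) (mod x^t). Then λ_1 = λ_2 and ω_1 = ω_2. -/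
open Polynomial

/-- Uniqueness for the key equation: if `(λ₁, ω₁)` and `(λ₂, ω₂)` both satisfy
`λ(0) = 1`, `gcd(λ, ω) = 1`, `deg ω < deg λ`, `2 deg λ ≤ t` and
`λ S ≡ ω (mod x^t)`, then `λ₁ = λ₂` and `ω₁ = ω₂`. -/
theorem key_equation_unique (K : Type*) [Field K] (t : ℕ) (ht : 0 < t)
    (S lam₁ om₁ lam₂ om₂ : Polynomial K)
    (h₁0 : lam₁.coeff 0 = 1) (h₁cop : IsCoprime lam₁ om₁)
    (h₁deg : om₁.degree < lam₁.degree) (h₁t : 2 * lam₁.natDegree ≤ t)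
    (h₁key : (X : Polynomial K) ^ t ∣ lam₁ * S - om₁)
    (h₂0 : lam₂.coeff 0 = 1) (h₂cop : IsCoprime lam₂ om₂)
    (h₂deg : om₂.degree < lam₂.degree) (h₂t : 2 * lam₂.natDegree ≤ t)
    (h₂key : (X : Polynomial K) ^ t ∣ lam₂ * S - om₂) :
    lam₁ = lam₂ ∧ om₁ = om₂ := by
  have hl₁ : lam₁ ≠ 0 := fun h => by simp [h] at h₁0
  have hl₂ : lam₂ ≠ 0 := fun h => by simp [h] at h₂0
  have hdvd : (X : Polynomial K) ^ t ∣ lam₁ * om₂ - lam₂ * om₁ := by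
    have := dvd_sub (Dvd.dvd.mul_left h₁key lam₂) (Dvd.dvd.mul_left h₂key lam₁)
    have heq : lam₂ * (lam₁ * S - om₁) - lam₁ * (lam₂ * S - om₂)
        = lam₁ * om₂ - lam₂ * om₁ := by ring
    rwa [heq] at this
  have hsum : (lam₁.natDegree : WithBot ℕ) + lam₂.natDegree ≤ (t : WithBot ℕ) := by
    have : lam₁.natDegree + lam₂.natDegree ≤ t := by omega
    exact_mod_cast this
  have hdeg : (lam₁ * om₂ - lam₂ * om₁).degree < ((X : Polynomial K) ^ t).degree := by
    rw [degree_X_pow]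
    apply lt_of_le_of_lt (degree_sub_le _ _)
    rw [max_lt_iff]
    constructor
    · rw [degree_mul]
      calc lam₁.degree + om₂.degree < lam₁.degree + lam₂.degree := by
            apply WithBot.add_lt_add_left (degree_ne_bot.mpr hl₁) h₂deg
        _ ≤ (t : WithBot ℕ) := by
            rw [degree_eq_natDegree hl₁, degree_eq_natDegree hl₂]; exact hsum
    · rw [degree_mul]
      calc lam₂.degree + om₁.degree < lam₂.degree + lam₁.degree := by
            apply WithBot.add_lt_add_left (degree_ne_bot.mpr hl₂) h₁deg
        _ ≤ (t : WithBot ℕ) := by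
            rw [degree_eq_natDegree hl₁, degree_eq_natDegree hl₂, add_comm]; exact hsum
  have hzero : lam₁ * om₂ - lam₂ * om₁ = 0 :=
    eq_zero_of_dvd_of_degree_lt hdvd hdeg
  have hcross : lam₁ * om₂ = lam₂ * om₁ := by linear_combination hzero
  -- lam₁ ∣ lam₂ and lam₂ ∣ lam₁
  have d₁ : lam₁ ∣ lam₂ :=
    h₁cop.dvd_of_dvd_mul_right ⟨om₂, by linear_combination -hcross⟩
  have d₂ : lam₂ ∣ lam₁ :=
    h₂cop.dvd_of_dvd_mul_right ⟨om₁, by linear_combination hcross⟩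
  obtain ⟨u, hu⟩ := (associated_of_dvd_dvd d₁ d₂).symm
  have hC : (u : Polynomial K) = C ((u : Polynomial K).coeff 0) :=
    Polynomial.eq_C_of_natDegree_eq_zero (Polynomial.natDegree_eq_zero_of_isUnit u.isUnit)
  have hcoeff : lam₁.coeff 0 = lam₂.coeff 0 * (u : Polynomial K).coeff 0 := by
    rw [← hu, hC, coeff_mul_C]; simp
  have hu1 : (u : Polynomial K).coeff 0 = 1 := by
    rw [h₂0, one_mul] at hcoeff; rw [← hcoeff, h₁0]
  have hlam : lam₁ = lam₂ := by rw [← hu, hC, hu1, map_one, mul_one]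
  refine ⟨hlam, ?_⟩
  have : lam₁ * om₂ = lam₁ * om₁ := by rw [hcross, hlam]
  exact (mul_left_cancel₀ hl₁ this).symm
end

section
/- Let g ∈ F[x] be a monic polynomial of degree t with no roots in E (in particular g(0) ≠ 0 and g(β^j) ≠ 0 for all j). Then for every c ∈ F^L: c ∈ C(g^{−1}, t) if and only if Σ_{l∈L} c_l · Σ_{j∈l} (x − β^j)^{−1} = 0 in the quotient ring E[x]/(g(x)), where (x − β^j)^{−1} denotes the inverse of x − β^j in E[x]/(g(x)) (which exists since g(β^j) ≠ 0). -/
/-!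
In `E[x]/(g)` the inverse of `x - b` is `-g(b)⁻¹ (g(x) - g(b))/(x - b)`, a polynomial of degree
`< t`. Hence `∑ c_l ∑_{j ∈ l} (x - β^j)⁻¹` is represented by a polynomial of degree `< t`, which
vanishes in the quotient only if it vanishes identically. Its coefficients are obtained from the
syndromes `S_s = ∑ c_l ∑_{j ∈ l} g(β^j)⁻¹ β^{js}`, `s < t`, by a triangular system whose
diagonal entries are the leading coefficient `1` of `g`, so they all vanish iff all `S_s` do; and
these are the parity checks of `C(g⁻¹, t)` because `g⁻¹(β^j) = g(β^j)⁻¹`.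
-/

open Polynomial

noncomputable section

open Finset

section Triangular

variable {R : Type*} [Semiring R]

theorem forall_sum_Icc_mul_eq_zero_iff {t : ℕ} {a : ℕ → R} (ha : a t = 1) (S : ℕ → R) :
    (∀ n < t, ∑ i ∈ Icc (n + 1) t, S (i - (n + 1)) * a i = 0) ↔ ∀ s < t, S s = 0 := by
  refine ⟨fun h s => ?_, fun h n hn => sum_eq_zero fun i hi => ?_⟩
  · induction s using Nat.strong_induction_on with
    | _ s ih =>
      intro hs
      obtain ⟨t, rfl⟩ : ∃ t', t = t' + 1 := ⟨t - 1, by omega⟩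
      have hrow := h (t - s) (by omega)
      rw [sum_Icc_succ_top (by omega), show t + 1 - (t - s + 1) = s by omega, ha, mul_one,
        sum_eq_zero fun i hi => ?_, zero_add] at hrow
      · exact hrow
      · rw [mem_Icc] at hi
        rw [ih _ (by omega) (by omega), zero_mul]
  · rw [mem_Icc] at hi
    rw [h _ (by omega), zero_mul]

end Triangular

namespace Polynomial

section CommRing

variable {R : Type*} [CommRing R]

theorem X_sub_C_mul_divByMonic_eq_sub_C_eval (p : R[X]) (b : R) :
    (X - C b) * (p /ₘ (X - C b)) = p - C (p.eval b) := by
  rw [X_sub_C_mul_divByMonic_eq_sub_modByMonic, modByMonic_X_sub_C_eq_C_eval]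

theorem coeff_sum_C_mul_divByMonic_X_sub_C {ι : Type*} (s : Finset ι) (p : R[X]) (v b : ι → R)
    (n : ℕ) :
    (∑ k ∈ s, C (v k) * (p /ₘ (X - C (b k)))).coeff n =
      ∑ i ∈ Icc (n + 1) p.natDegree, (∑ k ∈ s, v k * b k ^ (i - (n + 1))) * p.coeff i := by
  simp only [finsetSum_coeff, coeff_C_mul, coeff_divByMonic_X_sub_C, mul_sum, sum_mul]
  rw [sum_comm]
  exact sum_congr rfl fun i _ => sum_congr rfl fun k _ => by ring

end CommRing

theorem aeval_eq_inv_of_X_pow_sub_one_dvd {F E : Type*} [CommRing F] [Field E] [Algebra F E]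
    {g h : F[X]} {N : ℕ} (hgh : (X : F[X]) ^ N - 1 ∣ g * h - 1) {x : E} (hx : x ^ N = 1) :
    aeval x h = (aeval x g)⁻¹ := by
  obtain ⟨r, hr⟩ := hgh
  have hx' := congrArg (aeval x) hr
  simp only [map_sub, map_mul, map_one, map_pow, aeval_X, hx, sub_self, zero_mul,
    sub_eq_zero] at hx'
  exact eq_inv_of_mul_eq_one_right hx'

section Field

variable {K : Type*} [Field K] {g : K[X]}

theorem inverse_mk_X_sub_C {b : K} (hb : g.eval b ≠ 0) :
    Ring.inverse (Ideal.Quotient.mk (Ideal.span {g}) (X - C b)) =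
      -Ideal.Quotient.mk (Ideal.span {g}) (C (g.eval b)⁻¹ * (g /ₘ (X - C b))) := by
  set π := Ideal.Quotient.mk (Ideal.span {g})
  have hπg : π g = 0 := Ideal.Quotient.eq_zero_iff_dvd _ _ |>.mpr dvd_rfl
  have hmul : π (X - C b) * -π (C (g.eval b)⁻¹ * (g /ₘ (X - C b))) = 1 := by
    rw [← map_neg, ← map_mul, mul_neg, mul_left_comm, X_sub_C_mul_divByMonic_eq_sub_C_eval,
      mul_sub, ← C_mul, inv_mul_cancel₀ hb, map_neg, map_sub, map_mul, hπg, mul_zero, C_1,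
      map_one, zero_sub, neg_neg]
  rw [← mul_one (Ring.inverse _)]
  exact (Ring.inverse_mul_eq_iff_eq_mul _ 1 _ (.of_mul_eq_one _ hmul)).mpr hmul.symm

theorem sum_C_mul_inverse_mk_X_sub_C_eq_zero_iff (hg : g.Monic) {ι : Type*} (s : Finset ι)
    (u b : ι → K) (hb : ∀ k ∈ s, g.eval (b k) ≠ 0) :
    ∑ k ∈ s, Ideal.Quotient.mk (Ideal.span {g}) (C (u k)) *
        Ring.inverse (Ideal.Quotient.mk (Ideal.span {g}) (X - C (b k))) = 0 ↔
      ∀ n < g.natDegree, ∑ k ∈ s, u k * (g.eval (b k))⁻¹ * b k ^ n = 0 := by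
  set π := Ideal.Quotient.mk (Ideal.span {g})
  set P := ∑ k ∈ s, C (u k * (g.eval (b k))⁻¹) * (g /ₘ (X - C (b k)))
  have hsum : ∑ k ∈ s, π (C (u k)) * Ring.inverse (π (X - C (b k))) = -π P := by
    simp only [P, map_sum, ← sum_neg_distrib]
    refine sum_congr rfl fun k hk => ?_
    rw [inverse_mk_X_sub_C (hb k hk), ← map_neg, ← map_neg, ← map_mul, C_mul, mul_assoc, mul_neg]
  have hcoeff : ∀ n, P.coeff n = ∑ i ∈ Icc (n + 1) g.natDegree,
      (∑ k ∈ s, u k * (g.eval (b k))⁻¹ * b k ^ (i - (n + 1))) * g.coeff i :=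
    coeff_sum_C_mul_divByMonic_X_sub_C s g (fun k => u k * (g.eval (b k))⁻¹) b
  have hcoeff_of_le : ∀ n, g.natDegree ≤ n → P.coeff n = 0 := fun n hn => by
    rw [hcoeff, Icc_eq_empty (by omega), sum_empty]
  have hdeg : P.degree < g.degree := by
    rw [degree_eq_natDegree hg.ne_zero]
    exact (degree_lt_iff_coeff_zero P _).mpr hcoeff_of_le
  have hπP : π P = 0 ↔ P = 0 :=
    ⟨fun h => eq_zero_of_dvd_of_degree_lt ((Ideal.Quotient.eq_zero_iff_dvd _ _).mp h) hdeg,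
      fun h => h ▸ map_zero π⟩
  rw [hsum, neg_eq_zero, hπP, ← forall_sum_Icc_mul_eq_zero_iff hg.coeff_natDegree
    (fun e => ∑ k ∈ s, u k * (g.eval (b k))⁻¹ * b k ^ e)]
  simp only [← hcoeff]
  refine ⟨fun h n _ => h ▸ coeff_zero n, fun h => ext fun n => ?_⟩
  rw [coeff_zero]
  exact if hn : n < g.natDegree then h n hn else hcoeff_of_le n (not_lt.mp hn)

end Field

end Polynomial

theorem bpow_pow_eq_one {E : Type*} [Monoid E] {N : ℕ} {β : E} (hβ : β ^ N = 1) (j : ZMod N) :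
    bpow β j ^ N = 1 := by
  rw [bpow, ← pow_mul, mul_comm, pow_mul, hβ, one_pow]

theorem mem_codeSet_iff_sum_mul_inverse_eq_zero {F E : Type*} [Field F] [Field E] [Algebra F E]
    {N : ℕ} [NeZero N] (q : ℕ) {β : E} (hβ : β ^ N = 1) {g ginv : F[X]} (hg : g.Monic)
    (hgroots : ∀ x : E, aeval x g ≠ 0) (hginv : (X : F[X]) ^ N - 1 ∣ g * ginv - 1)
    (c : orbitSet N q → F) :
    c ∈ codeSet F E N q β ginv g.natDegree ↔
      ∑ᶠ l : orbitSet N q,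
        Ideal.Quotient.mk (Ideal.span {g.map (algebraMap F E)}) (C (algebraMap F E (c l))) *
          ∑ᶠ j ∈ (l : Set (ZMod N)),
            Ring.inverse (Ideal.Quotient.mk (Ideal.span {g.map (algebraMap F E)})
              (X - C (bpow β j))) = 0 := by
  have : Fintype (orbitSet N q) := Fintype.ofFinite _
  set T : orbitSet N q → Finset (ZMod N) := fun l => (l : Set (ZMod N)).toFinite.toFinset
  set gE := g.map (algebraMap F E)
  set π := Ideal.Quotient.mk (Ideal.span {gE})
  have hgE : ∀ x : E, gE.eval x = aeval x g := eval_map_algebraMap g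
  have hcode : c ∈ codeSet F E N q β ginv g.natDegree ↔ ∀ n < gE.natDegree,
      ∑ x ∈ univ.sigma T,
        algebraMap F E (c x.1) * (gE.eval (bpow β x.2))⁻¹ * bpow β x.2 ^ n = 0 := by
    rw [hg.natDegree_map]
    refine forall₂_congr fun n _ => ?_
    rw [finsum_eq_sum_of_fintype, sum_sigma]
    simp only [hEntry, finsum_mem_eq_finite_toFinset_sum _ (Set.toFinite _), mul_sum, hgE,
      aeval_eq_inv_of_X_pow_sub_one_dvd hginv (bpow_pow_eq_one hβ _), mul_assoc, T]
  have hquot : ∑ᶠ l : orbitSet N q, π (C (algebraMap F E (c l))) *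
      ∑ᶠ j ∈ (l : Set (ZMod N)), Ring.inverse (π (X - C (bpow β j))) =
      ∑ x ∈ univ.sigma T,
        π (C (algebraMap F E (c x.1))) * Ring.inverse (π (X - C (bpow β x.2))) := by
    rw [finsum_eq_sum_of_fintype, sum_sigma]
    simp only [finsum_mem_eq_finite_toFinset_sum _ (Set.toFinite _), mul_sum, T]
  rw [hcode, hquot, sum_C_mul_inverse_mk_X_sub_C_eq_zero_iff (hg.map _)]
  exact fun x _ => (hgE _).trans_ne (hgroots _)

theorem codeC_goppa_description_general (q m : ℕ)
    (F E : Type*) [Field F] [Field E] [Fintype E] [Algebra F E]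
    (hE : Fintype.card E = q ^ m)
    (β : E) (hβ : orderOf β = q ^ m - 1) (t : ℕ)
    (g : Polynomial F) (hgm : g.Monic) (hgt : g.natDegree = t)
    (hgroots : ∀ x : E, Polynomial.aeval x g ≠ 0)
    (ginv : Polynomial F)
    (hginv : (X : Polynomial F) ^ (q ^ m - 1) - 1 ∣ g * ginv - 1) :
    ∀ c : ↥(orbitSet (q ^ m - 1) q) → F,
      c ∈ codeSet F E (q ^ m - 1) q β ginv t ↔
      ∑ᶠ l : orbitSet (q ^ m - 1) q,
        Ideal.Quotient.mk (Ideal.span {g.map (algebraMap F E)})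
            (Polynomial.C (algebraMap F E (c l))) *
          ∑ᶠ j ∈ (l : Set (ZMod (q ^ m - 1))),
            Ring.inverse (Ideal.Quotient.mk (Ideal.span {g.map (algebraMap F E)})
              (Polynomial.X - Polynomial.C (bpow β j))) = 0 := by
  have : NeZero (q ^ m - 1) := ⟨by have := hE ▸ Fintype.one_lt_card (α := E); omega⟩
  subst hgt
  exact mem_codeSet_iff_sum_mul_inverse_eq_zero q (hβ ▸ pow_orderOf_eq_one β) hgm hgroots hginv

/-- For a monic `g ∈ F[x]` of degree `t` with no roots in `E` and inverse `g⁻¹` modulo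
`x^{q^m−1} − 1`:  `c ∈ C(g⁻¹, t)` if and only if
`∑_{l∈L} c_l ∑_{j∈l} (x − β^j)⁻¹ = 0` in `E[x]/(g)`. -/
theorem codeC_goppa_description (q m : ℕ) (hm : 0 < m) (hqm : Nat.Coprime q m)
    (F E : Type*) [Field F] [Field E] [Fintype F] [Fintype E] [Algebra F E]
    (hF : Fintype.card F = q) (hE : Fintype.card E = q ^ m)
    (β : E) (hβ : orderOf β = q ^ m - 1) (t : ℕ) (ht : 0 < t)
    (g : Polynomial F) (hgm : g.Monic) (hgt : g.natDegree = t)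
    (hgroots : ∀ x : E, Polynomial.aeval x g ≠ 0)
    (ginv : Polynomial F) (hginvdeg : ginv.degree < ((q ^ m - 1 : ℕ) : WithBot ℕ))
    (hginv : (X : Polynomial F) ^ (q ^ m - 1) - 1 ∣ g * ginv - 1) :
    ∀ c : ↥(orbitSet (q ^ m - 1) q) → F,
      c ∈ codeSet F E (q ^ m - 1) q β ginv t ↔
      ∑ᶠ l : orbitSet (q ^ m - 1) q,
        Ideal.Quotient.mk (Ideal.span {g.map (algebraMap F E)})
            (Polynomial.C (algebraMap F E (c l))) *
          ∑ᶠ j ∈ (l : Set (ZMod (q ^ m - 1))),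
            Ring.inverse (Ideal.Quotient.mk (Ideal.span {g.map (algebraMap F E)})
              (Polynomial.X - Polynomial.C (bpow β j))) = 0 :=
  codeC_goppa_description_general q m F E hE β hβ t g hgm hgt hgroots ginv hginv
end
end
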